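/- Let T be an n-tournament with Seidel adjacency matrix S, let m_{ij} denote the (i,j) entry of S², and let δ_T be the number of 4-element vertex subsets inducing a diamond. Then δ_T = n²(n-1)(n-2)/96 − (1/16)·Σ_{i<j} m_{ij}². -/

import Mathlib

open Finset Matrix

variable {V : Type*} [Fintype V] [DecidableEq V]

/-- A tournament given by a dominance function: `T i j = true` means `i` dominates `j`. -/
def IsTournament (T : V → V → Bool) : Prop :=
  (∀ i, T i i = false) ∧ ∀ i j, i ≠ j → T i j = !T j i

/-- The 0-1 adjacency matrix of a tournament. -/
def adj (T : V → V → Bool) : Matrix V V ℤ :=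
  Matrix.of fun i j => if T i j then 1 else 0

/-- The Seidel adjacency matrix `S = A - Aᵀ` of a tournament. -/
def seidel (T : V → V → Bool) : Matrix V V ℤ :=
  adj T - (adj T)ᵀ

/-- Number of 3-element subsets of `W` inducing a 3-cycle (each vertex dominates
exactly one other vertex of the triple). -/
def numC3On (T : V → V → Bool) (W : Finset V) : ℕ :=
  ((W.powersetCard 3).filter fun t => ∀ v ∈ t, (t.filter fun w => T v w).card = 1).card

/-- Number of 4-element subsets of `W` inducing a diamond, i.e. containing exactly one
3-element subset that induces a 3-cycle. -/
def numDiamondsOn (T : V → V → Bool) (W : Finset V) : ℕ :=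
  ((W.powersetCard 4).filter fun s =>
    ((s.powersetCard 3).filter fun t => ∀ v ∈ t, (t.filter fun w => T v w).card = 1).card
      = 1).card

/-- `δ_T`, the number of 4-element vertex subsets inducing a diamond. -/
def numDiamonds (T : V → V → Bool) : ℕ := numDiamondsOn T Finset.univ

/-- `c₃(T)`, the number of 3-element vertex subsets inducing a 3-cycle. -/
def numC3 (T : V → V → Bool) : ℕ := numC3On T Finset.univ

/-!
For `i ≠ j`, expand `m_{ij}² = (∑ₖ S_{ik} S_{kj})²` as a double sum over `k, l`: the terms with
`k = l` contribute `n - 2`, and as `S` has zero diagonal the others vanish unless `i, j, k, l` are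
distinct. Hence `∑_{i ≠ j} m_{ij}²` is `n(n-1)(n-2)` plus the sum of `S_{ik} S_{kj} S_{il} S_{lj}`
over all embeddings `Fin 4 ↪ V`. For a fixed embedding, the three ways of pairing its four vertices
give products summing to `1 - 4·[the image is a diamond]` (a check over the 64 tournaments on four
vertices), and every 4-set is the image of `4! = 24` embeddings; so three times the embedding sum
is `n(n-1)(n-2)(n-3) - 96 δ_T`.
-/

open Function
open scoped Nat

section Embeddings

variable {M : Type*} [AddCommMonoid M]

theorem injective_vecCons_four {α : Type*} {i j k l : α} :
    Injective ![i, j, k, l] ↔ i ≠ j ∧ i ≠ k ∧ i ≠ l ∧ j ≠ k ∧ j ≠ l ∧ k ≠ l := by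
  rw [← List.nodup_ofFn]
  simp [List.ofFn_succ, not_or, and_assoc]

theorem sum_embedding_fin_four (g : V → V → V → V → M) :
    ∑ f : Fin 4 ↪ V, g (f 0) (f 1) (f 2) (f 3) =
      ∑ q : (V × V) × (V × V),
        if Injective ![q.1.1, q.1.2, q.2.1, q.2.2] then g q.1.1 q.1.2 q.2.1 q.2.2 else 0 := by
  rw [← sum_filter]
  refine sum_bij' (fun f _ => ((f 0, f 1), (f 2, f 3)))
    (fun q hq => ⟨![q.1.1, q.1.2, q.2.1, q.2.2], (mem_filter.1 hq).2⟩) ?_ ?_ ?_ ?_ ?_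
  · intro f _
    have : ![f 0, f 1, f 2, f 3] = f := by ext u; fin_cases u <;> rfl
    simp [this, f.injective]
  · simp
  · intro f _; ext u; fin_cases u <;> rfl
  · intro q _; rfl
  · intro f _; rfl

theorem sum_embedding_comp_perm {α β : Type*} [Fintype α] [Fintype β] (σ : Equiv.Perm α)
    (g : (α ↪ β) → M) : ∑ f : α ↪ β, g (σ.toEmbedding.trans f) = ∑ f, g f :=
  Equiv.sum_comp (σ.symm.embeddingCongr (Equiv.refl β)) g

theorem card_embedding_map_univ_eq {k : ℕ} {s : Finset V} (hs : #s = k) :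
    #{f : Fin k ↪ V | univ.map f = s} = k ! := by
  have hcard : Fintype.card (Fin k ↪ s) = k ! := by
    simp [Fintype.card_embedding_eq, hs, Nat.descFactorial_self]
  rw [← hcard, ← Fintype.card_subtype]
  refine Fintype.card_congr
    { toFun := fun f => ⟨fun u => ⟨f.1 u, f.2.subset (mem_map_of_mem _ (mem_univ u))⟩,
        fun u v h => f.1.injective (congrArg Subtype.val h)⟩
      invFun := fun g => ⟨g.trans (Embedding.subtype _), ?_⟩
      left_inv := fun f => rfl
      right_inv := fun g => rfl }
  refine eq_of_subset_of_card_le (fun x hx => ?_) (by simp [hs])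
  obtain ⟨u, -, rfl⟩ := mem_map.1 hx
  exact (g u).2

theorem sum_embedding_map_univ {k : ℕ} (g : Finset V → M) :
    ∑ f : Fin k ↪ V, g (univ.map f) = k ! • ∑ s ∈ univ.powersetCard k, g s := by
  rw [← sum_fiberwise_of_maps_to (t := univ.powersetCard k) (g := fun f : Fin k ↪ V => univ.map f)
    (by simp), smul_sum]
  refine sum_congr rfl fun s hs => ?_
  rw [sum_congr rfl fun f hf => congrArg g (mem_filter.1 hf).2, sum_const,
    card_embedding_map_univ_eq (mem_powersetCard.1 hs).2]

end Embeddings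

theorem two_nsmul_sum_filter_lt {W M : Type*} [Fintype W] [LinearOrder W] [AddCommMonoid M]
    (f : W × W → M) (hf : ∀ p, f p.swap = f p) :
    2 • ∑ p ∈ univ.filter (fun p : W × W => p.1 < p.2), f p = ∑ p ∈ univ.offDiag, f p := by
  have hgt : ∑ p ∈ univ.filter (fun p : W × W => p.2 < p.1), f p =
      ∑ p ∈ univ.filter (fun p : W × W => p.1 < p.2), f p :=
    sum_nbij' Prod.swap Prod.swap (by simp) (by simp) (by simp) (by simp) (fun p _ => (hf p).symm)
  have hsplit : (univ : Finset W).offDiag =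
      univ.filter (fun p : W × W => p.1 < p.2) ∪ univ.filter (fun p : W × W => p.2 < p.1) := by
    ext p; simp
  rw [hsplit, sum_union (disjoint_filter.2 fun p _ h h' => lt_asymm h h'), hgt, two_nsmul]

def pathPairProd {α R : Type*} [Mul R] (M : Matrix α α R) (i j k l : α) : R :=
  M i k * M k j * (M i l * M l j)

theorem sq_apply_sq_eq_sum_pathPairProd {α R : Type*} [Fintype α] [DecidableEq α]
    [CommSemiring R] (M : Matrix α α R) (i j : α) :
    ((M ^ 2) i j) ^ 2 = ∑ k, ∑ l, pathPairProd M i j k l := by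
  rw [sq M, mul_apply, sq, sum_mul_sum]
  rfl

theorem pathPairProd_eq_of_diag_eq_zero {α R : Type*} [DecidableEq α] [CommSemiring R]
    {M : Matrix α α R} (hM : ∀ i, M i i = 0) {i j : α} (hij : i ≠ j) (k l : α) :
    pathPairProd M i j k l =
      (if k = l then M i k ^ 2 * M k j ^ 2 else 0) +
        if Injective ![i, j, k, l] then pathPairProd M i j k l else 0 := by
  by_cases hkl : k = l
  · subst hkl
    rw [if_pos rfl, if_neg (by simp [injective_vecCons_four]), add_zero, pathPairProd]
    ring
  by_cases hinj : Injective ![i, j, k, l]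
  · simp [hkl, hinj]
  rw [if_neg hkl, if_neg hinj, injective_vecCons_four] at *
  have : i = k ∨ i = l ∨ j = k ∨ j = l := by tauto
  rcases this with rfl | rfl | rfl | rfl <;> simp [pathPairProd, hM]

section Seidel

variable {α : Type*}

theorem seidel_apply_self (T : α → α → Bool) (i : α) : seidel T i i = 0 := by
  simp [seidel]

theorem seidel_transpose (T : α → α → Bool) : (seidel T)ᵀ = -seidel T := by
  simp [seidel]

theorem seidel_comp {β : Type*} (T : α → α → Bool) (f : β → α) :
    seidel (fun u v => T (f u) (f v)) = (seidel T).submatrix f f :=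
  rfl

theorem seidel_sq_transpose [Fintype α] [DecidableEq α] (T : α → α → Bool) :
    (seidel T ^ 2)ᵀ = seidel T ^ 2 := by
  rw [transpose_pow, seidel_transpose, neg_sq]

namespace IsTournament

variable {T : α → α → Bool}

theorem comp {β : Type*} (hT : IsTournament T) (f : β ↪ α) :
    IsTournament fun u v => T (f u) (f v) :=
  ⟨fun u => hT.1 (f u), fun u v h => hT.2 (f u) (f v) (f.injective.ne h)⟩

theorem seidel_apply_sq [DecidableEq α] (hT : IsTournament T) (i j : α) :
    seidel T i j ^ 2 = if i = j then 0 else 1 := by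
  split_ifs with h
  · simp [h, seidel_apply_self]
  · simp only [seidel, Matrix.sub_apply, transpose_apply, adj, of_apply]
    rw [hT.2 i j h]
    cases T j i <;> simp

theorem sum_seidel_sq_mul_seidel_sq [Fintype α] [DecidableEq α] (hT : IsTournament T) {i j : α}
    (hij : i ≠ j) : ∑ k, seidel T i k ^ 2 * seidel T k j ^ 2 = (Fintype.card α : ℤ) - 2 := by
  have hpair : ∀ k, seidel T i k ^ 2 * seidel T k j ^ 2 =
      if k ∈ ({i, j} : Finset α)ᶜ then 1 else 0 := by
    intro k
    simp only [hT.seidel_apply_sq, mem_compl, mem_insert, mem_singleton]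
    split_ifs <;> simp_all [eq_comm]
  simp only [hpair, sum_boole, filter_mem_eq_inter, univ_inter, card_compl, card_pair hij]
  rw [Nat.cast_sub (by simpa [card_pair hij] using card_le_univ ({i, j} : Finset α))]
  simp

theorem seidel_sq_apply_sq [Fintype α] [DecidableEq α] (hT : IsTournament T) {i j : α}
    (hij : i ≠ j) :
    ((seidel T ^ 2) i j) ^ 2 = (Fintype.card α : ℤ) - 2 +
      ∑ r : α × α,
        if Injective ![i, j, r.1, r.2] then pathPairProd (seidel T) i j r.1 r.2 else 0 := by
  rw [sq_apply_sq_eq_sum_pathPairProd, Fintype.sum_prod_type, ← hT.sum_seidel_sq_mul_seidel_sq hij]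
  rw [sum_congr rfl fun k _ => sum_congr rfl fun l _ =>
    pathPairProd_eq_of_diag_eq_zero (seidel_apply_self T) hij k l]
  simp only [sum_add_distrib, sum_ite_eq, mem_univ, if_true]

end IsTournament

end Seidel

section Diamonds

variable {α : Type*}

def cyclicTriangles (T : α → α → Bool) (s : Finset α) : Finset (Finset α) :=
  (s.powersetCard 3).filter fun t => ∀ v ∈ t, (t.filter fun w => T v w).card = 1

theorem card_cyclicTriangles_map {β : Type*} (T : α → α → Bool) (f : β ↪ α) (s : Finset β) :
    #(cyclicTriangles T (s.map f)) = #(cyclicTriangles (fun u v => T (f u) (f v)) s) := by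
  rw [cyclicTriangles, powersetCard_map, filter_map, card_map]
  congr 1
  refine filter_congr fun t _ => ?_
  simp [filter_map, card_map]

theorem numDiamonds_eq (T : V → V → Bool) :
    numDiamonds T = #{s ∈ univ.powersetCard 4 | #(cyclicTriangles T s) = 1} := by
  unfold numDiamonds numDiamondsOn cyclicTriangles
  congr!

def tournamentFinFour (a b c d e f : Bool) : Fin 4 → Fin 4 → Bool :=
  ![![false, a, b, c], ![!a, false, d, e], ![!b, !d, false, f], ![!c, !e, !f, false]]

namespace IsTournament

variable {T : α → α → Bool}

theorem eq_tournamentFinFour {T : Fin 4 → Fin 4 → Bool} (hT : IsTournament T) :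
    T = tournamentFinFour (T 0 1) (T 0 2) (T 0 3) (T 1 2) (T 1 3) (T 2 3) := by
  have h := hT.2
  funext u v
  fin_cases u <;> fin_cases v <;>
    simp [tournamentFinFour, hT.1, h 1 0 (by decide), h 2 0 (by decide), h 3 0 (by decide),
      h 2 1 (by decide), h 3 1 (by decide), h 3 2 (by decide)]

theorem pathPairProd_add_fin_four {T : Fin 4 → Fin 4 → Bool} (hT : IsTournament T) :
    pathPairProd (seidel T) 0 1 2 3 + pathPairProd (seidel T) 0 2 1 3 +
        pathPairProd (seidel T) 0 3 2 1 =
      1 - 4 * if #(cyclicTriangles T univ) = 1 then 1 else 0 := by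
  obtain ⟨a, b, c, d, e, f, rfl⟩ : ∃ a b c d e f, T = tournamentFinFour a b c d e f :=
    ⟨_, _, _, _, _, _, hT.eq_tournamentFinFour⟩
  clear hT
  revert a b c d e f
  decide

theorem pathPairProd_add_of_embedding (hT : IsTournament T) (f : Fin 4 ↪ α) :
    pathPairProd (seidel T) (f 0) (f 1) (f 2) (f 3) +
        pathPairProd (seidel T) (f 0) (f 2) (f 1) (f 3) +
        pathPairProd (seidel T) (f 0) (f 3) (f 2) (f 1) =
      1 - 4 * if #(cyclicTriangles T (univ.map f)) = 1 then 1 else 0 := by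
  simpa [seidel_comp, pathPairProd, card_cyclicTriangles_map] using
    (hT.comp f).pathPairProd_add_fin_four

end IsTournament

end Diamonds

namespace IsTournament

variable {T : V → V → Bool}

theorem three_mul_sum_pathPairProd (hT : IsTournament T) :
    3 * ∑ f : Fin 4 ↪ V, pathPairProd (seidel T) (f 0) (f 1) (f 2) (f 3) =
      (Fintype.card V).descFactorial 4 - 96 * numDiamonds T := by
  have h12 : ∑ f : Fin 4 ↪ V, pathPairProd (seidel T) (f 0) (f 2) (f 1) (f 3) =
      ∑ f : Fin 4 ↪ V, pathPairProd (seidel T) (f 0) (f 1) (f 2) (f 3) :=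
    sum_embedding_comp_perm (Equiv.swap 1 2)
      fun f => pathPairProd (seidel T) (f 0) (f 1) (f 2) (f 3)
  have h13 : ∑ f : Fin 4 ↪ V, pathPairProd (seidel T) (f 0) (f 3) (f 2) (f 1) =
      ∑ f : Fin 4 ↪ V, pathPairProd (seidel T) (f 0) (f 1) (f 2) (f 3) :=
    sum_embedding_comp_perm (Equiv.swap 1 3)
      fun f => pathPairProd (seidel T) (f 0) (f 1) (f 2) (f 3)
  calc 3 * ∑ f : Fin 4 ↪ V, pathPairProd (seidel T) (f 0) (f 1) (f 2) (f 3)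
      = ∑ f : Fin 4 ↪ V, (pathPairProd (seidel T) (f 0) (f 1) (f 2) (f 3) +
          pathPairProd (seidel T) (f 0) (f 2) (f 1) (f 3) +
          pathPairProd (seidel T) (f 0) (f 3) (f 2) (f 1)) := by
        rw [sum_add_distrib, sum_add_distrib, h12, h13]; ring
    _ = ∑ f : Fin 4 ↪ V, (1 - 4 * if #(cyclicTriangles T (univ.map f)) = 1 then 1 else 0) :=
        sum_congr rfl fun f _ => hT.pathPairProd_add_of_embedding f
    _ = (Fintype.card V).descFactorial 4 - 96 * numDiamonds T := by
        rw [sum_sub_distrib, ← mul_sum,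
          sum_embedding_map_univ fun s => if #(cyclicTriangles T s) = 1 then (1 : ℤ) else 0,
          sum_boole, sum_const, card_univ, Fintype.card_embedding_eq, Fintype.card_fin,
          numDiamonds_eq, nsmul_eq_mul, nsmul_eq_mul, mul_one]
        push_cast [Nat.factorial]
        ring

theorem sum_offDiag_seidel_sq_apply_sq (hT : IsTournament T) :
    ∑ p ∈ univ.offDiag, ((seidel T ^ 2) p.1 p.2) ^ 2 =
      (Fintype.card V : ℤ) * (Fintype.card V - 1) * (Fintype.card V - 2) +
        ∑ f : Fin 4 ↪ V, pathPairProd (seidel T) (f 0) (f 1) (f 2) (f 3) := by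
  rw [sum_congr rfl fun p hp => hT.seidel_sq_apply_sq (mem_offDiag.1 hp).2.2, sum_add_distrib,
    sum_const, offDiag_card, sum_embedding_fin_four, Fintype.sum_prod_type]
  rw [← sum_subset (subset_univ univ.offDiag) fun p _ hp => ?_]
  · rw [card_univ, nsmul_eq_mul, Nat.cast_sub (Nat.le_mul_self _)]
    push_cast
    ring
  · have : p.1 = p.2 := by simpa using hp
    simp [this, injective_vecCons_four]

end IsTournament

/-- `δ_T = n²(n-1)(n-2)/96 − (1/16)·Σ_{i<j} m_{ij}²`, where `m_{ij}` are the
entries of `S²`. -/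
theorem stmt_2 {n : ℕ} (T : Fin n → Fin n → Bool) (hT : IsTournament T) :
    (numDiamonds T : ℚ) =
      (n : ℚ)^2 * ((n : ℚ) - 1) * ((n : ℚ) - 2) / 96 -
        (1/16) * ∑ p ∈ Finset.univ.filter (fun p : Fin n × Fin n => p.1 < p.2),
          ((seidel T ^ 2) p.1 p.2 : ℚ)^2 := by
  have hsymm : ∀ p : Fin n × Fin n, ((seidel T ^ 2) p.2 p.1) ^ 2 = ((seidel T ^ 2) p.1 p.2) ^ 2 :=
    fun p => by rw [← transpose_apply (seidel T ^ 2), seidel_sq_transpose]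
  have hpairs := two_nsmul_sum_filter_lt (fun p => ((seidel T ^ 2) p.1 p.2) ^ 2) hsymm
  have hoff := hT.sum_offDiag_seidel_sq_apply_sq
  have hcycles := hT.three_mul_sum_pathPairProd
  have hdesc : ((n.descFactorial 4 : ℕ) : ℤ) = n * (n - 1) * (n - 2) * (n - 3) := by
    rw [← descPochhammer_eval_eq_descFactorial]
    simp [descPochhammer_succ_right]
  simp only [Fintype.card_fin, hdesc, two_nsmul] at hpairs hoff hcycles
  have key : 6 * ∑ p ∈ univ.filter (fun p : Fin n × Fin n => p.1 < p.2),
      ((seidel T ^ 2) p.1 p.2) ^ 2 = (n : ℤ) ^ 2 * (n - 1) * (n - 2) - 96 * numDiamonds T := by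
    linear_combination 3 * hpairs + 3 * hoff + hcycles
  have := congrArg (Int.cast : ℤ → ℚ) key
  push_cast at this
  linear_combination this / 96
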